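/- arXiv:2009.14328 — 2 statements merged into one kernel-verified Lean document; each statement's English description precedes it below -/
import Mathlib

section
/- State-feedback SLP sufficiency: let Φx, Φu be strictly proper stable rational matrices satisfying (zI - A)Φx - BΦu = I, with Φx invertible. Define K = Φu·Φx⁻¹, S_xu = Φx·B and S_uu = I + Φu·B. Then [[zI - A, -B],[-K, I]]·[[Φx, S_xu],[Φu, S_uu]] = I, and S_xu, S_uu are stable proper. -/
/-!
Proper stable rational functions form an `ℝ`-subalgebra `RH∞` of `ℝ(z)`: properness means
`v∞ r ≤ 1` for the valuation at infinity, and stability survives sums and products because the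
denominator of `r + s` or `r * s` divides the product of the denominators. So `S_xu = Φx B` and
`S_uu = I + Φu B`, being ring expressions in entries of `Φx`, `Φu` and constants, lie in `RH∞`.
The block identity is pure algebra: `K Φx = Φu` as `Φx` is invertible, and the affine constraint
`(zI - A) Φx - B Φu = I` yields each of the four blocks.
-/

set_option synthInstance.maxHeartbeats 1000000
set_option maxHeartbeats 1000000

noncomputable section

/-- A rational function is proper if its numerator degree does not exceed its denominator
degree. -/
def RatFunc.Proper (r : RatFunc ℝ) : Prop := r.num.degree ≤ r.denom.degree

/-- A rational function is strictly proper if its numerator degree is strictly smaller than its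
denominator degree. -/
def RatFunc.StrictlyProper (r : RatFunc ℝ) : Prop := r.num.degree < r.denom.degree

/-- A rational function is stable if all (complex) roots of its denominator lie strictly inside
the unit disc. -/
def RatFunc.Stable (r : RatFunc ℝ) : Prop :=
  ∀ w : ℂ, (r.denom.map (algebraMap ℝ ℂ)).IsRoot w → ‖w‖ < 1

namespace RatFunc

open Polynomial

theorem proper_iff_intDegree_nonpos {r : RatFunc ℝ} (hr : r ≠ 0) :
    r.Proper ↔ r.intDegree ≤ 0 := by
  rw [Proper, degree_eq_natDegree (num_ne_zero hr), degree_eq_natDegree r.denom_ne_zero,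
    Nat.cast_le, intDegree, sub_nonpos, Nat.cast_le]

open scoped Classical in
theorem proper_iff_inftyValuation_le_one (r : RatFunc ℝ) :
    r.Proper ↔ inftyValuation ℝ r ≤ 1 := by
  rcases eq_or_ne r 0 with rfl | hr
  · simp [Proper]
  · rw [proper_iff_intDegree_nonpos hr, inftyValuation_apply, inftyValuation_of_nonzero _ hr,
      ← WithZero.exp_zero, WithZero.exp_le_exp]

theorem Stable.of_denom_dvd_mul {r s t : RatFunc ℝ} (hr : r.Stable) (hs : s.Stable)
    (h : t.denom ∣ r.denom * s.denom) : t.Stable := by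
  intro w hw
  have hrs : ((r.denom * s.denom).map (algebraMap ℝ ℂ)).IsRoot w :=
    IsRoot.dvd hw (Polynomial.map_dvd (algebraMap ℝ ℂ) h)
  rw [Polynomial.map_mul, IsRoot.def, Polynomial.eval_mul, mul_eq_zero] at hrs
  exact hrs.elim (hr w) (hs w)

theorem stable_algebraMap (c : ℝ) : (algebraMap ℝ (RatFunc ℝ) c).Stable := by
  simp [Stable, algebraMap_eq_C, denom_C]

open scoped Classical in
def properSubalgebra : Subalgebra ℝ (RatFunc ℝ) where
  toSubsemiring := (inftyValuation ℝ).integer.toSubsemiring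
  algebraMap_mem' := Valuation.IsTrivialOn.valuation_algebraMap_le_one (inftyValuation ℝ)

open scoped Classical in
theorem mem_properSubalgebra {r : RatFunc ℝ} : r ∈ properSubalgebra ↔ r.Proper :=
  (proper_iff_inftyValuation_le_one r).symm

def stableSubalgebra : Subalgebra ℝ (RatFunc ℝ) where
  carrier := {r | r.Stable}
  mul_mem' hr hs := hr.of_denom_dvd_mul hs (denom_mul_dvd _ _)
  add_mem' hr hs := hr.of_denom_dvd_mul hs (denom_add_dvd _ _)
  algebraMap_mem' := stable_algebraMap

/-- The ring `RH∞` of proper stable transfer functions. -/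
def properStableSubalgebra : Subalgebra ℝ (RatFunc ℝ) := properSubalgebra ⊓ stableSubalgebra

theorem mem_properStableSubalgebra {r : RatFunc ℝ} :
    r ∈ properStableSubalgebra ↔ r.Proper ∧ r.Stable :=
  and_congr_left' mem_properSubalgebra

end RatFunc

namespace Matrix

variable {l m n R σ : Type*} [SetLike σ R] {S : σ}

theorem add_mem_matrix [AddZeroClass R] [AddMemClass σ R] {M N : Matrix m n R}
    (hM : M ∈ (S : Set R).matrix) (hN : N ∈ (S : Set R).matrix) :
    M + N ∈ (S : Set R).matrix :=
  fun i j => add_mem (hM i j) (hN i j)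

theorem mul_mem_matrix [Fintype m] [NonUnitalNonAssocSemiring R] [NonUnitalSubsemiringClass σ R]
    {M : Matrix l m R} {N : Matrix m n R} (hM : M ∈ (S : Set R).matrix)
    (hN : N ∈ (S : Set R).matrix) : M * N ∈ (S : Set R).matrix :=
  fun i k => sum_mem fun j _ => mul_mem (hM i j) (hN j k)

theorem one_mem_matrix [DecidableEq n] [NonAssocSemiring R] [SubsemiringClass σ R] :
    (1 : Matrix n n R) ∈ (S : Set R).matrix :=
  (diagonal_mem_matrix_iff (zero_mem S)).2 fun _ => one_mem S

theorem map_mem_matrix {K : Type*} (A : Matrix m n K) {f : K → R} (hf : ∀ x, f x ∈ S) :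
    A.map f ∈ (S : Set R).matrix :=
  fun i j => hf (A i j)

theorem fromBlocks_mul_fromBlocks_eq_one_of_mul_sub_mul_eq_one [Fintype m] [Fintype n] [DecidableEq m] [DecidableEq n] [CommRing R]
    {P Φx : Matrix n n R} {B : Matrix n m R} {Φu : Matrix m n R} (hΦx : IsUnit Φx.det)
    (h : P * Φx - B * Φu = 1) :
    fromBlocks P (-B) (-(Φu * Φx⁻¹)) 1 * fromBlocks Φx (Φx * B) Φu (1 + Φu * B) = 1 := by
  have hK : Φu * Φx⁻¹ * Φx = Φu := by
    rw [Matrix.mul_assoc, nonsing_inv_mul Φx hΦx, Matrix.mul_one]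
  rw [fromBlocks_multiply, ← fromBlocks_one, fromBlocks_inj]
  refine ⟨by rwa [Matrix.neg_mul, ← sub_eq_add_neg], ?_, ?_, ?_⟩
  · rw [← Matrix.mul_assoc, sub_eq_iff_eq_add.1 h, Matrix.add_mul, Matrix.one_mul,
      Matrix.neg_mul, Matrix.mul_add, Matrix.mul_one, Matrix.mul_assoc]
    abel
  · rw [Matrix.one_mul, Matrix.neg_mul, hK, neg_add_cancel]
  · rw [Matrix.one_mul, Matrix.neg_mul, ← Matrix.mul_assoc, hK]
    abel

end Matrix

/-- State-feedback SLP (sufficiency): if `Φx, Φu` are strictly proper stable rational matrices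
with `(zI - A) Φx - B Φu = I` and `Φx` is invertible, then setting `K = Φu Φx⁻¹`,
`S_xu = Φx B`, `S_uu = I + Φu B` yields
`[[zI - A, -B],[-K, I]] * [[Φx, S_xu],[Φu, S_uu]] = I`, with `S_xu, S_uu` stable proper. -/
theorem state_feedback_slp_sufficiency {n m : Type*} [Fintype n] [Fintype m]
    [DecidableEq n] [DecidableEq m]
    (A : Matrix n n ℝ) (B : Matrix n m ℝ)
    (Φx : Matrix n n (RatFunc ℝ)) (Φu : Matrix m n (RatFunc ℝ))
    (hΦx : ∀ i j, (Φx i j).StrictlyProper ∧ (Φx i j).Stable)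
    (hΦu : ∀ i j, (Φu i j).StrictlyProper ∧ (Φu i j).Stable)
    (hinv : IsUnit Φx.det)
    (haffine : ((RatFunc.X : RatFunc ℝ) • (1 : Matrix n n (RatFunc ℝ))
        - A.map (algebraMap ℝ (RatFunc ℝ))) * Φx
        - (B.map (algebraMap ℝ (RatFunc ℝ))) * Φu = 1) :
    Matrix.fromBlocks
        ((RatFunc.X : RatFunc ℝ) • (1 : Matrix n n (RatFunc ℝ))
          - A.map (algebraMap ℝ (RatFunc ℝ)))
        (-(B.map (algebraMap ℝ (RatFunc ℝ)))) (-(Φu * Φx⁻¹)) (1 : Matrix m m (RatFunc ℝ))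
        * Matrix.fromBlocks Φx (Φx * B.map (algebraMap ℝ (RatFunc ℝ)))
            Φu (1 + Φu * B.map (algebraMap ℝ (RatFunc ℝ))) = 1 ∧
    (∀ i j, ((Φx * B.map (algebraMap ℝ (RatFunc ℝ))) i j).Proper
        ∧ ((Φx * B.map (algebraMap ℝ (RatFunc ℝ))) i j).Stable) ∧
    (∀ i j, (((1 + Φu * B.map (algebraMap ℝ (RatFunc ℝ)) : Matrix m m (RatFunc ℝ))) i j).Proper
        ∧ (((1 + Φu * B.map (algebraMap ℝ (RatFunc ℝ)) : Matrix m m (RatFunc ℝ))) i j).Stable) := by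
  let S : Set (RatFunc ℝ) := RatFunc.properStableSubalgebra
  have hRH {r : RatFunc ℝ} (hr : r.StrictlyProper ∧ r.Stable) : r ∈ S :=
    RatFunc.mem_properStableSubalgebra.2 ⟨hr.1.le, hr.2⟩
  have hB : B.map (algebraMap ℝ (RatFunc ℝ)) ∈ S.matrix :=
    Matrix.map_mem_matrix B RatFunc.properStableSubalgebra.algebraMap_mem
  have hxB : Φx * B.map (algebraMap ℝ (RatFunc ℝ)) ∈ S.matrix :=
    Matrix.mul_mem_matrix (fun i j => hRH (hΦx i j)) hB
  have huB : 1 + Φu * B.map (algebraMap ℝ (RatFunc ℝ)) ∈ S.matrix :=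
    Matrix.add_mem_matrix Matrix.one_mem_matrix
      (Matrix.mul_mem_matrix (fun i j => hRH (hΦu i j)) hB)
  exact ⟨Matrix.fromBlocks_mul_fromBlocks_eq_one_of_mul_sub_mul_eq_one hinv haffine,
    fun i j => RatFunc.mem_properStableSubalgebra.1 (hxB i j),
    fun i j => RatFunc.mem_properStableSubalgebra.1 (huB i j)⟩
end
end

section
/- Original SLS realization stability: let Φx, Φu satisfy (zI - A)Φx - BΦu = I with associated S_xu = Φx B, S_uu = I + Φu B, and let R_r = [[A + (1-z)I, B, 0],[0, 0, zΦu],[I, 0, I - zΦx]]. Then (I - R_r)·S_r = S_r·(I - R_r) = I where S_r = [[Φx, S_xu, Φx(zI - A) - I],[Φu, S_uu, Φu(zI - A)],[z⁻¹I, z⁻¹B, I - z⁻¹A]]. -/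
/-!
Only `(I - R_r) S_r = I` has to be checked: a one-sided inverse of a square matrix over a
commutative ring is two-sided. In the first block row of that product each block is the affine
constraint `(zI - A)Φx - BΦu = I` multiplied on the right by `I`, `B` or `zI - A`, minus the same
factor; the other two block rows only use `z⁻¹ z = 1`.
-/

set_option synthInstance.maxHeartbeats 1000000
set_option maxHeartbeats 1000000

noncomputable section

/-- A 3×3 block matrix. -/
def blk3 {n m p α : Type*}
    (M11 : Matrix n n α) (M12 : Matrix n m α) (M13 : Matrix n p α)
    (M21 : Matrix m n α) (M22 : Matrix m m α) (M23 : Matrix m p α)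
    (M31 : Matrix p n α) (M32 : Matrix p m α) (M33 : Matrix p p α) :
    Matrix (n ⊕ (m ⊕ p)) (n ⊕ (m ⊕ p)) α :=
  Matrix.fromBlocks M11 (Matrix.fromCols M12 M13) (Matrix.fromRows M21 M31)
    (Matrix.fromBlocks M22 M23 M32 M33)

section Blk3

variable {n m p α : Type*}

lemma blk3_mul [Fintype n] [Fintype m] [Fintype p] [NonUnitalNonAssocSemiring α]
    (M11 : Matrix n n α) (M12 : Matrix n m α) (M13 : Matrix n p α)
    (M21 : Matrix m n α) (M22 : Matrix m m α) (M23 : Matrix m p α)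
    (M31 : Matrix p n α) (M32 : Matrix p m α) (M33 : Matrix p p α)
    (N11 : Matrix n n α) (N12 : Matrix n m α) (N13 : Matrix n p α)
    (N21 : Matrix m n α) (N22 : Matrix m m α) (N23 : Matrix m p α)
    (N31 : Matrix p n α) (N32 : Matrix p m α) (N33 : Matrix p p α) :
    blk3 M11 M12 M13 M21 M22 M23 M31 M32 M33 * blk3 N11 N12 N13 N21 N22 N23 N31 N32 N33 =
      blk3 (M11 * N11 + M12 * N21 + M13 * N31) (M11 * N12 + M12 * N22 + M13 * N32)
        (M11 * N13 + M12 * N23 + M13 * N33)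
        (M21 * N11 + M22 * N21 + M23 * N31) (M21 * N12 + M22 * N22 + M23 * N32)
        (M21 * N13 + M22 * N23 + M23 * N33)
        (M31 * N11 + M32 * N21 + M33 * N31) (M31 * N12 + M32 * N22 + M33 * N32)
        (M31 * N13 + M32 * N23 + M33 * N33) := by
  ext (i | i | i) (j | j | j) <;>
    simp [blk3, Matrix.mul_apply, Fintype.sum_sum_type, add_assoc]

lemma blk3_sub [Sub α]
    (M11 : Matrix n n α) (M12 : Matrix n m α) (M13 : Matrix n p α)
    (M21 : Matrix m n α) (M22 : Matrix m m α) (M23 : Matrix m p α)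
    (M31 : Matrix p n α) (M32 : Matrix p m α) (M33 : Matrix p p α)
    (N11 : Matrix n n α) (N12 : Matrix n m α) (N13 : Matrix n p α)
    (N21 : Matrix m n α) (N22 : Matrix m m α) (N23 : Matrix m p α)
    (N31 : Matrix p n α) (N32 : Matrix p m α) (N33 : Matrix p p α) :
    blk3 M11 M12 M13 M21 M22 M23 M31 M32 M33 - blk3 N11 N12 N13 N21 N22 N23 N31 N32 N33 =
      blk3 (M11 - N11) (M12 - N12) (M13 - N13) (M21 - N21) (M22 - N22) (M23 - N23)
        (M31 - N31) (M32 - N32) (M33 - N33) := by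
  ext (i | i | i) (j | j | j) <;> rfl

lemma blk3_one [DecidableEq n] [DecidableEq m] [DecidableEq p] [Zero α] [One α] :
    blk3 1 0 0 0 1 0 0 0 1 = (1 : Matrix (n ⊕ (m ⊕ p)) (n ⊕ (m ⊕ p)) α) := by
  ext (i | i | i) (j | j | j) <;> simp [blk3, Matrix.one_apply]

end Blk3

section SLS

variable {R n m : Type*} [CommRing R] [DecidableEq n] [DecidableEq m]

def slsRealization (A : Matrix n n R) (B : Matrix n m R) (Φx : Matrix n n R) (Φu : Matrix m n R)
    (z : R) : Matrix (n ⊕ (m ⊕ n)) (n ⊕ (m ⊕ n)) R :=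
  blk3 (A + (1 - z) • 1) B 0
    0 0 (z • Φu)
    1 0 (1 - z • Φx)

def slsStability [Fintype n] (A : Matrix n n R) (B : Matrix n m R) (Φx : Matrix n n R)
    (Φu : Matrix m n R) (z w : R) : Matrix (n ⊕ (m ⊕ n)) (n ⊕ (m ⊕ n)) R :=
  blk3 Φx (Φx * B) (Φx * (z • 1 - A) - 1)
    Φu (1 + Φu * B) (Φu * (z • 1 - A))
    (w • 1) (w • B) (1 - w • A)

lemma one_sub_slsRealization (A : Matrix n n R) (B : Matrix n m R) (Φx : Matrix n n R)
    (Φu : Matrix m n R) (z : R) :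
    1 - slsRealization A B Φx Φu z =
      blk3 (z • 1 - A) (-B) 0
        0 1 (-(z • Φu))
        (-1) 0 (z • Φx) := by
  rw [slsRealization, ← blk3_one, blk3_sub]
  congr 1 <;> module

variable [Fintype n] [Fintype m]

theorem one_sub_slsRealization_mul_slsStability (A : Matrix n n R) (B : Matrix n m R)
    (Φx : Matrix n n R) (Φu : Matrix m n R) {z w : R} (hwz : w * z = 1)
    (haffine : (z • 1 - A) * Φx - B * Φu = 1) :
    (1 - slsRealization A B Φx Φu z) * slsStability A B Φx Φu z w = 1 := by
  have hAΦx : A * Φx = z • Φx - B * Φu - 1 := by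
    rw [sub_mul, smul_mul_assoc, one_mul] at haffine
    rw [← haffine]; abel
  rw [one_sub_slsRealization, slsStability, blk3_mul, ← blk3_one]
  congr 1 <;>
    simp only [Matrix.mul_add, Matrix.sub_mul, Matrix.mul_sub, Matrix.neg_mul, Matrix.zero_mul,
      Matrix.one_mul, Matrix.mul_one, Matrix.smul_mul, Matrix.mul_smul, ← Matrix.mul_assoc, hAΦx,
      smul_sub, smul_neg, smul_smul, hwz, one_smul] <;>
    module

theorem slsStability_mul_one_sub_slsRealization (A : Matrix n n R) (B : Matrix n m R)
    (Φx : Matrix n n R) (Φu : Matrix m n R) {z w : R} (hwz : w * z = 1)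
    (haffine : (z • 1 - A) * Φx - B * Φu = 1) :
    slsStability A B Φx Φu z w * (1 - slsRealization A B Φx Φu z) = 1 :=
  mul_eq_one_comm.mp (one_sub_slsRealization_mul_slsStability A B Φx Φu hwz haffine)

end SLS

/-- Original state-feedback SLS realization stability: if `(zI - A) Φx - B Φu = I`, then the
realization `R_r = [[A + (1-z)I, B, 0],[0, 0, zΦu],[I, 0, I - zΦx]]` (internal state `(x, u, δ)`)
has stability matrix
`S_r = [[Φx, Φx B, Φx(zI - A) - I],[Φu, I + Φu B, Φu(zI - A)],[z⁻¹I, z⁻¹B, I - z⁻¹A]]`, i.e.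
`(I - R_r) S_r = S_r (I - R_r) = I`. -/
theorem original_sls_realization {n m : Type*} [Fintype n] [Fintype m]
    [DecidableEq n] [DecidableEq m]
    (A : Matrix n n ℝ) (B : Matrix n m ℝ)
    (Φx : Matrix n n (RatFunc ℝ)) (Φu : Matrix m n (RatFunc ℝ))
    (haffine : ((RatFunc.X : RatFunc ℝ) • (1 : Matrix n n (RatFunc ℝ))
        - A.map (algebraMap ℝ (RatFunc ℝ))) * Φx
        - (B.map (algebraMap ℝ (RatFunc ℝ))) * Φu = 1)
    (Rr Sr : Matrix (n ⊕ (m ⊕ n)) (n ⊕ (m ⊕ n)) (RatFunc ℝ))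
    (hRr : Rr = blk3
      (A.map (algebraMap ℝ (RatFunc ℝ))
        + (1 - (RatFunc.X : RatFunc ℝ)) • (1 : Matrix n n (RatFunc ℝ)))
      (B.map (algebraMap ℝ (RatFunc ℝ))) 0
      0 0 ((RatFunc.X : RatFunc ℝ) • Φu)
      (1 : Matrix n n (RatFunc ℝ)) 0
      ((1 : Matrix n n (RatFunc ℝ)) - (RatFunc.X : RatFunc ℝ) • Φx))
    (hSr : Sr = blk3
      Φx (Φx * B.map (algebraMap ℝ (RatFunc ℝ)))
      (Φx * ((RatFunc.X : RatFunc ℝ) • (1 : Matrix n n (RatFunc ℝ))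
        - A.map (algebraMap ℝ (RatFunc ℝ))) - 1)
      Φu (1 + Φu * B.map (algebraMap ℝ (RatFunc ℝ)))
      (Φu * ((RatFunc.X : RatFunc ℝ) • (1 : Matrix n n (RatFunc ℝ))
        - A.map (algebraMap ℝ (RatFunc ℝ))))
      ((RatFunc.X : RatFunc ℝ)⁻¹ • (1 : Matrix n n (RatFunc ℝ)))
      ((RatFunc.X : RatFunc ℝ)⁻¹ • B.map (algebraMap ℝ (RatFunc ℝ)))
      ((1 : Matrix n n (RatFunc ℝ))
        - (RatFunc.X : RatFunc ℝ)⁻¹ • A.map (algebraMap ℝ (RatFunc ℝ)))) :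
    (1 - Rr) * Sr = 1 ∧ Sr * (1 - Rr) = 1 := by
  have hwz : (RatFunc.X : RatFunc ℝ)⁻¹ * RatFunc.X = 1 := inv_mul_cancel₀ RatFunc.X_ne_zero
  subst hRr hSr
  exact ⟨one_sub_slsRealization_mul_slsStability _ _ Φx Φu hwz haffine,
    slsStability_mul_one_sub_slsRealization _ _ Φx Φu hwz haffine⟩
end
end
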